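/- arXiv:math/0104012 — 4 statements merged into one kernel-verified Lean document; each statement's English description precedes it below -/
import Mathlib

section
/- Let n be an odd positive integer. Then for the dihedral group E_{2n} of order 2n (DihedralGroup n in Mathlib), D(E_{2n}) = σ(n) + 2n, where σ(n) is the sum of the divisors of n. -/
/-!
Every subgroup of the rotation subgroup `⟨r 1⟩` is normal, since conjugation acts on rotations by
`r i ↦ r (± i)`. A normal subgroup containing a reflection `sr i` contains its conjugates
`sr (i - 2j)`; for odd `n` these are all reflections, which generate the whole group. So the
normal subgroups are the whole group (order `2n`) and the subgroups of the cyclic group of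
rotations, one of each order `d ∣ n`.
-/

/-- `D G` is the sum of the orders of all normal subgroups of `G`
(including the trivial subgroup and `G` itself). -/
noncomputable def D (G : Type*) [Group G] : ℕ :=
  ∑ᶠ N ∈ {N : Subgroup G | N.Normal}, Nat.card N

open Subgroup

namespace IsCyclic

variable {G : Type*} [Group G] [Finite G] [IsCyclic G]

theorem coe_subgroup_eq_setOf_pow_card_eq_one (H : Subgroup G) :
    (H : Set G) = {a | a ^ Nat.card H = 1} := by
  classical
  have := Fintype.ofFinite G
  refine Set.eq_of_subset_of_ncard_le (fun a ha => ?_) ?_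
  · exact congrArg Subtype.val (pow_card_eq_one' (x := (⟨a, ha⟩ : H)))
  · rw [← Finset.coe_filter_univ, Set.ncard_coe_finset, ← Nat.card_coe_set_eq]
    exact card_pow_eq_one_le Nat.card_pos

theorem subgroup_eq_of_card_eq {H K : Subgroup G} (h : Nat.card H = Nat.card K) : H = K :=
  SetLike.coe_injective <| by
    rw [coe_subgroup_eq_setOf_pow_card_eq_one, coe_subgroup_eq_setOf_pow_card_eq_one, h]

theorem exists_subgroup_card_eq {d : ℕ} (hd : d ∣ Nat.card G) :
    ∃ H : Subgroup G, Nat.card H = d := by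
  obtain ⟨g, hg⟩ := exists_ofOrder_eq_natCard (α := G)
  refine ⟨zpowers (g ^ (Nat.card G / d)), ?_⟩
  rw [Nat.card_zpowers, orderOf_pow, hg, Nat.gcd_eq_right (Nat.div_dvd_of_dvd hd),
    Nat.div_div_self hd Nat.card_pos.ne']

theorem finsum_card_subgroup :
    ∑ᶠ H : Subgroup G, Nat.card H = ∑ d ∈ (Nat.card G).divisors, d := by
  rw [← finsum_mem_univ, ← finsum_mem_coe_finset]
  refine finsum_mem_eq_of_bijOn (fun H => Nat.card H) ⟨fun H _ => ?_, ?_, fun d hd => ?_⟩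
    fun _ _ => rfl
  · exact Nat.mem_divisors.2 ⟨card_subgroup_dvd_card H, Nat.card_pos.ne'⟩
  · exact fun H _ K _ h => subgroup_eq_of_card_eq h
  · obtain ⟨H, hH⟩ := exists_subgroup_card_eq (Nat.dvd_of_mem_divisors hd)
    exact ⟨H, trivial, hH⟩

end IsCyclic

theorem Subgroup.finsum_mem_card_le {G : Type*} [Group G] (R : Subgroup G) :
    ∑ᶠ N ∈ {N : Subgroup G | N ≤ R}, Nat.card N = ∑ᶠ H : Subgroup R, Nat.card H := by
  calc ∑ᶠ N ∈ {N : Subgroup G | N ≤ R}, Nat.card N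
      = ∑ᶠ N : {N : Subgroup G // N ≤ R}, Nat.card N.1 := (finsum_subtype_eq_finsum_cond _).symm
    _ = ∑ᶠ H : Subgroup R, Nat.card (MapSubtype.orderIso R H).1 :=
      (finsum_comp_equiv (MapSubtype.orderIso R).toEquiv).symm
    _ = ∑ᶠ H : Subgroup R, Nat.card H :=
      finsum_congr fun _ => card_map_of_injective R.subtype_injective

namespace DihedralGroup

variable {n : ℕ}

def rotations (n : ℕ) : Subgroup (DihedralGroup n) := zpowers (r 1)

instance : IsCyclic (rotations n) := isCyclic_zpowers _

theorem r_mem_rotations (i : ZMod n) : r i ∈ rotations n :=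
  mem_zpowers_iff.2 ⟨i.cast, by rw [r_one_zpow, ZMod.intCast_zmod_cast]⟩

theorem sr_notMem_rotations (i : ZMod n) : sr i ∉ rotations n := by
  intro hi
  obtain ⟨k, hk⟩ := mem_zpowers_iff.1 hi
  rw [r_one_zpow] at hk
  cases hk

theorem mem_rotations_iff {x : DihedralGroup n} : x ∈ rotations n ↔ ∃ i, x = r i := by
  rcases x with i | i
  · simp [r_mem_rotations]
  · simp [sr_notMem_rotations]

theorem card_rotations : Nat.card (rotations n) = n := by
  rw [rotations, Nat.card_zpowers, orderOf_r_one]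

theorem normal_of_le_rotations {N : Subgroup (DihedralGroup n)} (h : N ≤ rotations n) :
    N.Normal := by
  refine ⟨fun x hx g => ?_⟩
  obtain ⟨i, rfl⟩ := mem_rotations_iff.1 (h hx)
  rcases g with j | j
  · have : r j * r i * (r j)⁻¹ = r i := by
      rw [inv_r, r_mul_r, r_mul_r]
      ring_nf
    rwa [this]
  · have : sr j * r i * (sr j)⁻¹ = (r i)⁻¹ := by
      rw [inv_sr, inv_r, sr_mul_r, sr_mul_sr]
      ring_nf
    rw [this]
    exact inv_mem hx

theorem eq_top_of_sr_mem (hn : Odd n) {N : Subgroup (DihedralGroup n)} (hN : N.Normal) {i : ZMod n}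
    (hi : sr i ∈ N) : N = ⊤ := by
  obtain ⟨m, hm⟩ : ∃ m : ZMod n, 2 * m = 1 :=
    ((ZMod.isUnit_iff_coprime 2 n).2 (Nat.coprime_two_left.2 hn)).exists_right_inv
  have hsr : ∀ k, sr k ∈ N := fun k => by
    convert hN.conj_mem _ hi (r (m * (i - k))) using 1
    rw [inv_r, r_mul_sr, sr_mul_r, sr.injEq]
    linear_combination (i - k) * hm
  rw [eq_top_iff']
  rintro (k | k)
  · simpa using mul_mem (hsr 0) (hsr k)
  · exact hsr k

theorem normal_iff_eq_top_or_le_rotations (hn : Odd n) {N : Subgroup (DihedralGroup n)} :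
    N.Normal ↔ N = ⊤ ∨ N ≤ rotations n := by
  refine ⟨fun hN => or_iff_not_imp_right.2 fun hle => ?_, ?_⟩
  · obtain ⟨x, hxN, hx⟩ := SetLike.not_le_iff_exists.1 hle
    rcases x with i | i
    · exact absurd (r_mem_rotations i) hx
    · exact eq_top_of_sr_mem hn hN hxN
  · rintro (rfl | h)
    · infer_instance
    · exact normal_of_le_rotations h

end DihedralGroup

open DihedralGroup in
theorem stmt_4_general (n : ℕ) (hodd : Odd n) :
    D (DihedralGroup n) = (∑ d ∈ n.divisors, d) + 2 * n := by
  have : NeZero n := ⟨hodd.pos.ne'⟩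
  have hnormal : {N : Subgroup (DihedralGroup n) | N.Normal} = insert ⊤ {N | N ≤ rotations n} :=
    Set.ext fun _ => normal_iff_eq_top_or_le_rotations hodd
  have htop : ⊤ ∉ {N | N ≤ rotations n} := fun h => sr_notMem_rotations 0 (h (mem_top _))
  rw [D, hnormal, finsum_mem_insert _ htop (Set.toFinite _), finsum_mem_card_le,
    IsCyclic.finsum_card_subgroup, card_rotations, card_top, nat_card, add_comm]

/-- For odd positive `n`, `D` of the dihedral group of order `2n` equals `σ(n) + 2n`,
where `σ(n)` is the sum of the divisors of `n`. -/
theorem stmt_4 (n : ℕ) (hn : 0 < n) (hodd : Odd n) :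
    D (DihedralGroup n) = (∑ d ∈ n.divisors, d) + 2 * n :=
  stmt_4_general n hodd
end

section
/- Let n be an even integer with n ≥ 2. Then for the dihedral group E_{2n} of order 2n (DihedralGroup n in Mathlib), D(E_{2n}) > 4n; in particular E_{2n} is not a perfect group. -/
theorem Subgroup.index_ker_of_surjective {G G' : Type*} [Group G] [Group G'] {f : G →* G'}
    (hf : Function.Surjective f) : f.ker.index = Nat.card G' := by
  rw [Subgroup.index_ker, MonoidHom.range_eq_top.mpr hf, Subgroup.card_top]

theorem sum_card_le_D {G : Type*} [Group G] [Finite G] (s : Finset (Subgroup G))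
    (hs : ∀ N ∈ s, N.Normal) : ∑ N ∈ s, Nat.card N ≤ D G := by
  have hfin := Set.toFinite {N : Subgroup G | N.Normal}
  rw [D, finsum_mem_eq_finite_toFinset_sum _ hfin]
  exact Finset.sum_le_sum_of_subset fun N hN => hfin.mem_toFinset.2 (hs N hN)

theorem two_mul_card_lt_D_of_index_eq_two {G : Type*} [Group G] [Finite G] {H K : Subgroup G}
    (hH : H.index = 2) (hK : K.index = 2) (hHK : H ≠ K) : 2 * Nat.card G < D G := by
  classical
  have hcardH : Nat.card H * 2 = Nat.card G := hH ▸ H.card_mul_index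
  have hcardK : Nat.card K * 2 = Nat.card G := hK ▸ K.card_mul_index
  have hH_ne_bot : H ≠ ⊥ := by
    rintro rfl
    rw [Subgroup.card_bot] at hcardH
    exact hHK (Subgroup.card_eq_one.mp (by omega)).symm
  have hK_ne_bot : K ≠ ⊥ := by
    rintro rfl
    rw [Subgroup.card_bot] at hcardK
    exact hHK (Subgroup.card_eq_one.mp (by omega))
  have hH_ne_top : H ≠ ⊤ := fun h => by simp [h] at hH
  have hK_ne_top : K ≠ ⊤ := fun h => by simp [h] at hK
  have hbot_ne_top : (⊥ : Subgroup G) ≠ ⊤ := fun h => hH_ne_top (top_le_iff.1 (h ▸ bot_le))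
  calc 2 * Nat.card G < ∑ N ∈ ({⊥, H, K, ⊤} : Finset (Subgroup G)), Nat.card N := by
        rw [Finset.sum_insert (by simp [hH_ne_bot.symm, hK_ne_bot.symm, hbot_ne_top]),
          Finset.sum_insert (by simp [hHK, hH_ne_top]), Finset.sum_pair hK_ne_top,
          Subgroup.card_bot, Subgroup.card_top]
        omega
    _ ≤ D G := sum_card_le_D _ <| by
        simp only [Finset.mem_insert, Finset.mem_singleton]
        rintro N (rfl | rfl | rfl | rfl)
        exacts [inferInstance, Subgroup.normal_of_index_eq_two hH,
          Subgroup.normal_of_index_eq_two hK, inferInstance]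

namespace DihedralGroup

def orientation (n : ℕ) : DihedralGroup n →* Multiplicative (ZMod 2) where
  toFun
    | r _ => Multiplicative.ofAdd 0
    | sr _ => Multiplicative.ofAdd 1
  map_one' := rfl
  map_mul' x y := by
    rcases x with i | i <;> rcases y with j | j <;>
      simp only [r_mul_r, r_mul_sr, sr_mul_r, sr_mul_sr, ← ofAdd_add] <;> rfl

variable {n : ℕ}

def parity (h : 2 ∣ n) : DihedralGroup n →* Multiplicative (ZMod 2) where
  toFun
    | r i => Multiplicative.ofAdd (ZMod.castHom h (ZMod 2) i)
    | sr i => Multiplicative.ofAdd (ZMod.castHom h (ZMod 2) i)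
  map_one' := congrArg Multiplicative.ofAdd (map_zero (ZMod.castHom h (ZMod 2)))
  map_mul' x y := by
    rcases x with i | i <;> rcases y with j | j <;>
      simp only [r_mul_r, r_mul_sr, sr_mul_r, sr_mul_sr, ← ofAdd_add, map_add, map_sub,
        CharTwo.sub_eq_add, add_comm]

theorem parity_r (h : 2 ∣ n) (i : ZMod n) :
    parity h (r i) = Multiplicative.ofAdd (ZMod.castHom h (ZMod 2) i) := rfl

theorem parity_sr (h : 2 ∣ n) (i : ZMod n) :
    parity h (sr i) = Multiplicative.ofAdd (ZMod.castHom h (ZMod 2) i) := rfl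

theorem orientation_surjective : Function.Surjective (orientation n) := by
  intro x
  fin_cases x
  exacts [⟨r 0, rfl⟩, ⟨sr 0, rfl⟩]

theorem parity_surjective (h : 2 ∣ n) : Function.Surjective (parity h) := by
  intro x
  refine ⟨r (x.toAdd.val : ZMod n), ?_⟩
  rw [parity_r, map_natCast, ZMod.natCast_zmod_val]
  rfl

theorem ker_orientation_ne_ker_parity (h : 2 ∣ n) : (orientation n).ker ≠ (parity h).ker := by
  have hparity : sr 0 ∈ (parity h).ker := by
    rw [MonoidHom.mem_ker, parity_sr, map_zero]
    rfl
  have horientation : sr 0 ∉ (orientation n).ker := by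
    change Multiplicative.ofAdd (1 : ZMod 2) ≠ 1
    decide
  exact fun heq => horientation (heq ▸ hparity)

theorem index_ker_orientation : (orientation n).ker.index = 2 := by
  rw [Subgroup.index_ker_of_surjective orientation_surjective, Nat.card_eq_fintype_card]
  rfl

theorem index_ker_parity (h : 2 ∣ n) : (parity h).ker.index = 2 := by
  rw [Subgroup.index_ker_of_surjective (parity_surjective h), Nat.card_eq_fintype_card]
  rfl

end DihedralGroup

/-- For even `n ≥ 2`, `D` of the dihedral group of order `2n` exceeds `4n`;
in particular the dihedral group is not a perfect group. -/
theorem stmt_5 (n : ℕ) (hn : 2 ≤ n) (heven : Even n) :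
    4 * n < D (DihedralGroup n) ∧
      D (DihedralGroup n) ≠ 2 * Nat.card (DihedralGroup n) := by
  have : NeZero n := ⟨by omega⟩
  have hcard : Nat.card (DihedralGroup n) = 2 * n := DihedralGroup.nat_card
  have hlt := two_mul_card_lt_D_of_index_eq_two DihedralGroup.index_ker_orientation
    (DihedralGroup.index_ker_parity heven.two_dvd)
    (DihedralGroup.ker_orientation_ne_ker_parity heven.two_dvd)
  omega
end

section
/- D is multiplicative: if G₁ and G₂ are finite groups whose orders are coprime, then D(G₁ × G₂) = D(G₁) · D(G₂). -/
/-!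
If `|G₁|` and `|G₂|` are coprime, the Chinese remainder theorem gives an exponent `m` with
`(a, b) ^ m = (a, 1)` for all `(a, b)`, and likewise one with `(a, b) ^ m = (1, b)`. Hence every
subgroup `N` of `G₁ × G₂` containing `(a, b)` also contains `(a, 1)` and `(1, b)`, so `N` is the
product of its images in `G₁` and `G₂`. The normal subgroups of `G₁ × G₂` are therefore exactly the
products `A × B` of normal subgroups, and `|A × B| = |A| |B|` makes the sum split.
-/

theorem finsum_mem_mul_finsum_mem {α β R : Type*} [CommSemiring R] {s : Set α} {t : Set β}
    (hs : s.Finite) (ht : t.Finite) (f : α → R) (g : β → R) :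
    (∑ᶠ a ∈ s, f a) * ∑ᶠ b ∈ t, g b = ∑ᶠ p ∈ s ×ˢ t, f p.1 * g p.2 := by
  rw [finsum_mem_eq_finite_toFinset_sum _ hs, finsum_mem_eq_finite_toFinset_sum _ ht,
    finsum_mem_eq_finite_toFinset_sum _ (hs.prod ht), ← Set.Finite.toFinset_prod,
    Finset.sum_mul_sum, Finset.sum_product]

theorem pow_eq_pow_of_modEq_natCard {G : Type*} [Group G] (g : G) {m n : ℕ}
    (h : m ≡ n [MOD Nat.card G]) : g ^ m = g ^ n :=
  pow_eq_pow_iff_modEq.2 (h.of_dvd (orderOf_dvd_natCard g))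

namespace Subgroup

variable {G₁ G₂ : Type*} [Group G₁] [Group G₂]

theorem map_fst_prod (A : Subgroup G₁) (B : Subgroup G₂) :
    (A.prod B).map (MonoidHom.fst G₁ G₂) = A := by
  ext a
  simpa [mem_prod] using fun _ => ⟨1, B.one_mem⟩

theorem map_snd_prod (A : Subgroup G₁) (B : Subgroup G₂) :
    (A.prod B).map (MonoidHom.snd G₁ G₂) = B := by
  ext b
  simpa [mem_prod] using fun _ => ⟨1, A.one_mem⟩

theorem card_prod (A : Subgroup G₁) (B : Subgroup G₂) :
    Nat.card (A.prod B) = Nat.card A * Nat.card B :=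
  (Nat.card_congr (prodEquiv A B).toEquiv).trans (Nat.card_prod A B)

section Coprime

variable (hco : (Nat.card G₁).Coprime (Nat.card G₂))
include hco

theorem exists_pow_eq_of_coprime (a b : ℕ) :
    ∃ m : ℕ, ∀ x : G₁ × G₂, x ^ m = (x.1 ^ a, x.2 ^ b) :=
  ⟨Nat.chineseRemainder hco a b, fun x => Prod.ext
    (pow_eq_pow_of_modEq_natCard x.1 (Nat.chineseRemainder hco a b).2.1)
    (pow_eq_pow_of_modEq_natCard x.2 (Nat.chineseRemainder hco a b).2.2)⟩

theorem mk_fst_one_mem_of_coprime {N : Subgroup (G₁ × G₂)} {x : G₁ × G₂} (hx : x ∈ N) :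
    (x.1, 1) ∈ N := by
  obtain ⟨m, hm⟩ := exists_pow_eq_of_coprime hco 1 0
  simpa [hm] using N.pow_mem hx m

theorem mk_one_snd_mem_of_coprime {N : Subgroup (G₁ × G₂)} {x : G₁ × G₂} (hx : x ∈ N) :
    (1, x.2) ∈ N := by
  obtain ⟨m, hm⟩ := exists_pow_eq_of_coprime hco 0 1
  simpa [hm] using N.pow_mem hx m

theorem eq_prod_map_fst_snd_of_coprime (N : Subgroup (G₁ × G₂)) :
    N = (N.map (MonoidHom.fst G₁ G₂)).prod (N.map (MonoidHom.snd G₁ G₂)) := by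
  refine le_antisymm (le_prod_iff.2 ⟨le_rfl, le_rfl⟩) ?_
  rintro ⟨_, _⟩ ⟨⟨x, hx, rfl⟩, ⟨y, hy, rfl⟩⟩
  simpa using N.mul_mem (mk_fst_one_mem_of_coprime hco hx) (mk_one_snd_mem_of_coprime hco hy)

theorem bijOn_prod_normal_of_coprime :
    Set.BijOn (fun p : Subgroup G₁ × Subgroup G₂ => p.1.prod p.2)
      ({A | A.Normal} ×ˢ {B | B.Normal}) {N | N.Normal} := by
  refine ⟨fun p ⟨hA, hB⟩ => @prod_normal _ _ _ _ p.1 p.2 hA hB, ?_, fun N hN => ?_⟩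
  · intro p _ q _ h
    exact Prod.ext (by simpa only [map_fst_prod] using congrArg (map (MonoidHom.fst G₁ G₂)) h)
      (by simpa only [map_snd_prod] using congrArg (map (MonoidHom.snd G₁ G₂)) h)
  · refine ⟨(N.map (MonoidHom.fst G₁ G₂), N.map (MonoidHom.snd G₁ G₂)),
      ⟨hN.map _ Prod.fst_surjective, hN.map _ Prod.snd_surjective⟩,
      (eq_prod_map_fst_snd_of_coprime hco N).symm⟩

end Coprime

end Subgroup

/-- `D` is multiplicative: if `G₁` and `G₂` have coprime orders, then
`D (G₁ × G₂) = D G₁ * D G₂`. -/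
theorem stmt_8 (G₁ G₂ : Type*) [Group G₁] [Group G₂] [Finite G₁] [Finite G₂]
    (hco : Nat.Coprime (Nat.card G₁) (Nat.card G₂)) :
    D (G₁ × G₂) = D G₁ * D G₂ := by
  rw [D, D, D, finsum_mem_mul_finsum_mem (Set.toFinite _) (Set.toFinite _)]
  exact (finsum_mem_eq_of_bijOn _ (Subgroup.bijOn_prod_normal_of_coprime hco)
    fun p _ => (Subgroup.card_prod p.1 p.2).symm).symm
end

section
/- If G is a finite group with D(G) ≤ 2·|G|, then G has a normal generator: there exists an element h ∈ G such that the only normal subgroup of G containing h is G itself. -/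
namespace Subgroup

variable {G : Type*} [Group G]

theorem card_le_finsum_card_of_forall_exists_mem [Finite G] {S : Set (Subgroup G)}
    (hS : ∀ g : G, ∃ N ∈ S, g ∈ N) : Nat.card G ≤ ∑ᶠ N ∈ S, Nat.card N := by
  have hunion : (⋃ N ∈ S, (N : Set G)) = Set.univ :=
    Set.eq_univ_of_forall fun g ↦ by simpa using hS g
  calc Nat.card G = (⋃ N ∈ S, (N : Set G)).ncard := by rw [hunion, Set.ncard_univ]
    _ ≤ ∑ᶠ N ∈ S, (N : Set G).ncard := S.toFinite.ncard_biUnion_le _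
    _ = ∑ᶠ N ∈ S, Nat.card N := by simp only [← Nat.card_coe_set_eq, SetLike.coe_sort_coe]

theorem setOf_normal_eq_insert_top_insert_bot :
    {N : Subgroup G | N.Normal} =
      insert ⊤ (insert ⊥ {N : Subgroup G | N.Normal ∧ N ≠ ⊥ ∧ N ≠ ⊤}) := by
  ext N
  by_cases hbot : N = ⊥
  · subst hbot; simp [normal_bot]
  · by_cases htop : N = ⊤
    · subst htop; simp [normal_top]
    · simp [hbot, htop]

theorem exists_normal_ne_bot_ne_top_mem [Nontrivial G]
    (h : ∀ g : G, ∃ N : Subgroup G, N.Normal ∧ g ∈ N ∧ N ≠ ⊤) (g : G) :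
    ∃ N ∈ {N : Subgroup G | N.Normal ∧ N ≠ ⊥ ∧ N ≠ ⊤}, g ∈ N := by
  have hne_one : ∀ y : G, y ≠ 1 → ∃ N ∈ {N : Subgroup G | N.Normal ∧ N ≠ ⊥ ∧ N ≠ ⊤}, y ∈ N :=
    fun y hy ↦
      let ⟨N, hN, hyN, htop⟩ := h y
      ⟨N, ⟨hN, fun hbot ↦ hy (mem_bot.1 (hbot ▸ hyN)), htop⟩, hyN⟩
  by_cases hg : g = 1
  · obtain ⟨x, hx⟩ := exists_ne (1 : G)
    obtain ⟨N, hN, -⟩ := hne_one x hx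
    exact ⟨N, hN, hg ▸ N.one_mem⟩
  · exact hne_one g hg

theorem D_eq_card_add_one_add_finsum [Finite G] [Nontrivial G] :
    D G = Nat.card G + 1 +
      ∑ᶠ N ∈ {N : Subgroup G | N.Normal ∧ N ≠ ⊥ ∧ N ≠ ⊤}, Nat.card N := by
  rw [D, setOf_normal_eq_insert_top_insert_bot, finsum_mem_insert _ (by simp [top_ne_bot])
    (Set.toFinite _), finsum_mem_insert _ (by simp) (Set.toFinite _), card_top, card_bot, add_assoc]

theorem two_mul_card_lt_D_of_forall_exists_normal_ne_top [Finite G]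
    (h : ∀ g : G, ∃ N : Subgroup G, N.Normal ∧ g ∈ N ∧ N ≠ ⊤) : 2 * Nat.card G < D G := by
  have : Nontrivial G := by
    by_contra hG
    rw [not_nontrivial_iff_subsingleton] at hG
    obtain ⟨N, -, -, htop⟩ := h 1
    exact htop (Subsingleton.elim _ _)
  have hcover := card_le_finsum_card_of_forall_exists_mem (exists_normal_ne_bot_ne_top_mem h)
  rw [D_eq_card_add_one_add_finsum]
  omega

end Subgroup

/-- If `D G ≤ 2·|G|` then `G` has a normal generator: an element contained in
no proper normal subgroup. -/
theorem stmt_15 (G : Type*) [Group G] [Finite G] (hD : D G ≤ 2 * Nat.card G) :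
    ∃ h : G, ∀ N : Subgroup G, N.Normal → h ∈ N → N = ⊤ := by
  by_contra! hcon
  exact hD.not_gt (Subgroup.two_mul_card_lt_D_of_forall_exists_normal_ne_top hcon)
end
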